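/- Spatial integration-by-parts for Hermite expansions (base case N = 1): let g : ℝ → ℂ be a C¹ function such that g(x)h_ξ(x) → 0 and g'(x)h_ξ(x) → 0 as |x| → ∞ for all relevant indices, and let ξ, η ∈ ℕ. Then 2(ξ − η)·∫_ℝ g(x) h_ξ(x) h_η(x) dx = ∫_ℝ g'(x)·[ h_ξ'(x) h_η(x) − h_ξ(x) h_η'(x) ] dx. -/

import Mathlib

/-!
The Hermite functions satisfy the eigenvalue equation `h_k'' = (t² - (2k + 1)) h_k`, so by the
Lagrange identity their Wronskian `W = h_ξ' h_η - h_ξ h_η'` has `W' = 2 (η - ξ) h_ξ h_η`.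
Integrating `g W'` by parts gives the identity. Both `W` and `h_ξ h_η` are polynomials times
`exp (-t²)`, which beats the growth of `g` and `g'` allowed by `g h_0 → 0` and `g' h_0 → 0`
(`h_0` is a multiple of `exp (-t² / 2)`); this gives all the integrability needed.

The eigenvalue equation comes from the equation `He'' - x He' + n He = 0` of Mathlib's
probabilists' Hermite polynomials, through `H_k(t) = 2^(k/2) He_k(√2 t)`.
-/

open Real

/-- Physicists' Hermite polynomial. -/
noncomputable def H (k : ℕ) (t : ℝ) : ℝ :=
  (-1 : ℝ) ^ k * Real.exp (t ^ 2) * iteratedDeriv k (fun s : ℝ => Real.exp (-s ^ 2)) t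

/-- Hermite function. -/
noncomputable def h (k : ℕ) (t : ℝ) : ℝ :=
  ((2 : ℝ) ^ k * (Nat.factorial k : ℝ) * Real.sqrt Real.pi) ^ (-(1 : ℝ) / 2)
    * H k t * Real.exp (-t ^ 2 / 2)

open Polynomial MeasureTheory Filter Asymptotics Topology

namespace Polynomial

theorem derivative_hermite_succ (n : ℕ) :
    derivative (hermite (n + 1)) = (n + 1 : ℤ[X]) * hermite n := by
  induction n with
  | zero => simp
  | succ n ih =>
    rw [hermite_succ (n + 1), derivative_sub, derivative_mul, derivative_X, one_mul, ih,
      derivative_mul]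
    simp only [derivative_add, derivative_natCast, derivative_one, add_zero, zero_mul, zero_add]
    push_cast
    linear_combination (-(n + 1 : ℤ[X])) * hermite_succ n

theorem hermite_ode (n : ℕ) :
    derivative (derivative (hermite n)) - X * derivative (hermite n) + (n : ℤ[X]) * hermite n =
      0 := by
  cases n with
  | zero => simp
  | succ n =>
    rw [derivative_hermite_succ, derivative_mul]
    simp only [derivative_add, derivative_natCast, derivative_one, add_zero, zero_mul, zero_add]
    push_cast
    linear_combination (n + 1 : ℤ[X]) * hermite_succ n

end Polynomial

theorem H_eq_aeval_hermite (k : ℕ) (t : ℝ) :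
    H k t = √2 ^ k * aeval (√2 * t) (hermite k) := by
  have hfun : (fun s : ℝ => exp (-s ^ 2)) =
      fun s => (fun y => exp (-(y ^ 2 / 2))) (√2 * s) := by
    funext s
    simp only [mul_pow, sq_sqrt zero_le_two]
    ring_nf
  have hsmooth : ContDiff ℝ k fun y : ℝ => exp (-(y ^ 2 / 2)) := by fun_prop
  rw [H, hfun, iteratedDeriv_comp_const_mul hsmooth, iteratedDeriv_eq_iterate]
  simp only [deriv_gaussian_eq_hermite_mul_gaussian, mul_pow, sq_sqrt zero_le_two]
  have hexp : exp (t ^ 2) * exp (-(2 * t ^ 2 / 2)) = 1 := by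
    rw [← exp_add]; ring_nf; exact exp_zero
  have hsign : (-1 : ℝ) ^ k * (-1) ^ k = 1 := by rw [← mul_pow]; norm_num
  linear_combination (√2 ^ k * aeval (√2 * t) (hermite k)) *
    ((-1) ^ k * (-1) ^ k * hexp + hsign)

noncomputable def hermiteFunctionPoly (k : ℕ) : ℝ[X] :=
  C (((2 : ℝ) ^ k * k.factorial * √π) ^ (-(1 : ℝ) / 2) * √2 ^ k) *
    ((hermite k).map (Int.castRingHom ℝ)).comp (C √2 * X)

noncomputable def gaussianDerivative (P : ℝ[X]) : ℝ[X] :=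
  derivative P - X * P

theorem h_eq (k : ℕ) : h k = fun t => (hermiteFunctionPoly k).eval t * exp (-t ^ 2 / 2) := by
  funext t
  rw [h, H_eq_aeval_hermite, aeval_def, eval₂_eq_eval_map, algebraMap_int_eq]
  simp only [hermiteFunctionPoly, eval_mul, eval_C, eval_comp, eval_X]
  ring

theorem hermiteFunctionPoly_ode (k : ℕ) :
    derivative (derivative (hermiteFunctionPoly k)) - 2 * X * derivative (hermiteFunctionPoly k)
      + 2 * (k : ℝ[X]) * hermiteFunctionPoly k = 0 := by
  set Q := (hermite k).map (Int.castRingHom ℝ)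
  have hQ : (derivative (derivative Q) - X * derivative Q + (k : ℝ[X]) * Q).comp (C √2 * X) =
      0 := by
    have := congrArg (Polynomial.map (Int.castRingHom ℝ)) (hermite_ode k)
    simp only [Polynomial.map_add, Polynomial.map_sub, Polynomial.map_mul, map_X,
      Polynomial.map_natCast, ← derivative_map, Polynomial.map_zero] at this
    rw [this, zero_comp]
  have hsqrt2 : (C √2 * C √2 : ℝ[X]) = 2 := by rw [← C_mul, mul_self_sqrt zero_le_two]; rfl
  simp only [sub_comp, add_comp, mul_comp, X_comp, natCast_comp] at hQ
  simp only [hermiteFunctionPoly, derivative_mul, derivative_C, zero_mul, zero_add, derivative_comp,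
    derivative_X, mul_one]
  linear_combination C (((2 : ℝ) ^ k * k.factorial * √π) ^ (-(1 : ℝ) / 2) * √2 ^ k) *
    (2 * hQ + (derivative (derivative Q)).comp (C √2 * X) * hsqrt2)

theorem hasDerivAt_eval_mul_exp_neg_sq_div_two (P : ℝ[X]) (t : ℝ) :
    HasDerivAt (fun t => P.eval t * exp (-t ^ 2 / 2))
      ((gaussianDerivative P).eval t * exp (-t ^ 2 / 2)) t := by
  have hexponent : HasDerivAt (fun t : ℝ => -t ^ 2 / 2) (-t) t :=
    ((hasDerivAt_pow 2 t).neg.div_const 2).congr_deriv (by ring)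
  refine ((P.hasDerivAt t).mul hexponent.exp).congr_deriv ?_
  simp only [gaussianDerivative, eval_sub, eval_mul, eval_X]
  ring

theorem hasDerivAt_h (k : ℕ) (t : ℝ) :
    HasDerivAt (h k)
      ((gaussianDerivative (hermiteFunctionPoly k)).eval t * exp (-t ^ 2 / 2)) t := by
  rw [h_eq]
  exact hasDerivAt_eval_mul_exp_neg_sq_div_two _ t

theorem deriv_h (k : ℕ) :
    deriv (h k) = fun t => (gaussianDerivative (hermiteFunctionPoly k)).eval t * exp (-t ^ 2 / 2) :=
  funext fun t => (hasDerivAt_h k t).deriv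

theorem hasDerivAt_deriv_h (k : ℕ) (t : ℝ) :
    HasDerivAt (deriv (h k)) ((t ^ 2 - (2 * k + 1)) * h k t) t := by
  rw [deriv_h]
  convert hasDerivAt_eval_mul_exp_neg_sq_div_two _ t using 1
  have hode := congrArg (eval t) (hermiteFunctionPoly_ode k)
  simp only [eval_sub, eval_add, eval_mul, eval_X, eval_ofNat, eval_natCast, eval_zero] at hode
  simp only [h_eq, gaussianDerivative, derivative_sub, derivative_mul, derivative_X, one_mul,
    eval_sub, eval_add, eval_mul, eval_X]
  linear_combination (-exp (-t ^ 2 / 2)) * hode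

theorem differentiable_h (k : ℕ) : Differentiable ℝ (h k) :=
  fun t => (hasDerivAt_h k t).differentiableAt

theorem hasDerivAt_wronskian {u v u' v' : ℝ → ℝ} {a b w t : ℝ}
    (hu : HasDerivAt u (u' t) t) (hu' : HasDerivAt u' ((w - a) * u t) t)
    (hv : HasDerivAt v (v' t) t) (hv' : HasDerivAt v' ((w - b) * v t) t) :
    HasDerivAt (fun s => u' s * v s - u s * v' s) ((b - a) * u t * v t) t :=
  ((hu'.mul hv).sub (hu.mul hv')).congr_deriv (by ring)

theorem integrable_eval_mul_exp_neg_mul_sq (P : ℝ[X]) {b : ℝ} (hb : 0 < b) :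
    Integrable fun t => P.eval t * exp (-b * t ^ 2) := by
  induction P using Polynomial.induction_on' with
  | add p q hp hq =>
    refine (hp.add hq).congr (Eventually.of_forall fun t => ?_)
    simp only [Pi.add_apply, eval_add, add_mul]
  | monomial n a =>
    have hs : (-1 : ℝ) < n := by linarith [n.cast_nonneg (α := ℝ)]
    simpa only [eval_monomial, mul_assoc, rpow_natCast] using
      (integrable_rpow_mul_exp_neg_mul_sq hb hs).const_mul a

theorem exp_neg_sq_div_two_mul_self (t : ℝ) :
    exp (-t ^ 2 / 2) * exp (-t ^ 2 / 2) = exp (-t ^ 2) := by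
  rw [← exp_add]; ring_nf

theorem integrable_mul_of_eq_eval_mul_exp_neg_sq {F : ℝ → ℂ} {f : ℝ → ℝ} {P : ℝ[X]}
    (hF : Continuous F)
    (hF0 : Tendsto (fun t => F t * (exp (-t ^ 2 / 2) : ℂ)) (cocompact ℝ) (𝓝 0))
    (hf : ∀ t, f t = P.eval t * exp (-t ^ 2)) :
    Integrable fun t => F t * (f t : ℂ) := by
  have hsplit : (fun t => F t * (f t : ℂ)) =
      fun t => F t * (exp (-t ^ 2 / 2) : ℂ) * (P.eval t * exp (-(1 / 2) * t ^ 2) : ℝ) := by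
    funext t
    rw [hf, ← exp_neg_sq_div_two_mul_self]
    push_cast
    ring_nf
  have hbigO := (hF0.isBigO_one ℂ).mul (isBigO_refl
    (fun t => ((P.eval t * exp (-(1 / 2) * t ^ 2) : ℝ) : ℂ)) (cocompact ℝ))
  rw [hsplit]
  refine (by fun_prop : Continuous _).locallyIntegrable.integrable_of_isBigO_cocompact hbigO ?_
  have hweight : Integrable fun t => ((P.eval t * exp (-(1 / 2) * t ^ 2) : ℝ) : ℂ) :=
    (integrable_eval_mul_exp_neg_mul_sq P one_half_pos).ofReal
  simpa only [one_mul] using hweight.integrableAtFilter _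

theorem h_zero (t : ℝ) : h 0 t = √π ^ (-(1 : ℝ) / 2) * exp (-t ^ 2 / 2) := by
  simp [h, H, ← exp_add]

theorem tendsto_mul_exp_of_tendsto_mul_h_zero {F : ℝ → ℂ}
    (hF : Tendsto (fun t => F t * (h 0 t : ℂ)) (cocompact ℝ) (𝓝 0)) :
    Tendsto (fun t => F t * (exp (-t ^ 2 / 2) : ℂ)) (cocompact ℝ) (𝓝 0) := by
  have hc : ((√π ^ (-(1 : ℝ) / 2) : ℝ) : ℂ) ≠ 0 := by
    have : 0 < √π ^ (-(1 : ℝ) / 2) := by positivity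
    exact_mod_cast this.ne'
  convert hF.const_mul ((√π ^ (-(1 : ℝ) / 2) : ℝ) : ℂ)⁻¹ using 2 with t
  · rw [h_zero]; push_cast; field_simp
  · simp

theorem h_mul_h_eq (j k : ℕ) (t : ℝ) :
    h j t * h k t = (hermiteFunctionPoly j * hermiteFunctionPoly k).eval t * exp (-t ^ 2) := by
  simp only [h_eq, eval_mul, ← exp_neg_sq_div_two_mul_self]
  ring

theorem wronskian_h_eq (j k : ℕ) (t : ℝ) :
    deriv (h j) t * h k t - h j t * deriv (h k) t =
      (gaussianDerivative (hermiteFunctionPoly j) * hermiteFunctionPoly k -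
        hermiteFunctionPoly j * gaussianDerivative (hermiteFunctionPoly k)).eval t *
          exp (-t ^ 2) := by
  rw [deriv_h, deriv_h]
  simp only [h_eq, eval_sub, eval_mul, ← exp_neg_sq_div_two_mul_self]
  ring

theorem hasDerivAt_wronskian_h (j k : ℕ) (t : ℝ) :
    HasDerivAt (fun s => deriv (h j) s * h k s - h j s * deriv (h k) s)
      ((2 * k - 2 * j) * (h j t * h k t)) t :=
  (hasDerivAt_wronskian (differentiable_h j t).hasDerivAt (hasDerivAt_deriv_h j t)
    (differentiable_h k t).hasDerivAt (hasDerivAt_deriv_h k t)).congr_deriv (by ring)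

open MeasureTheory Filter

theorem spatial_integration_by_parts_base (g : ℝ → ℂ) (hg : ContDiff ℝ 1 g)
    (hdecay : ∀ k : ℕ, Tendsto (fun x => g x * (h k x : ℂ)) (cocompact ℝ) (nhds 0))
    (hdecay' : ∀ k : ℕ, Tendsto (fun x => deriv g x * (h k x : ℂ)) (cocompact ℝ) (nhds 0))
    (ξ η : ℕ) :
    2 * ((ξ : ℂ) - (η : ℂ)) * ∫ x : ℝ, g x * (h ξ x : ℂ) * (h η x : ℂ)
      = ∫ x : ℝ, deriv g x *
          ((Complex.ofReal (deriv (h ξ) x)) * (h η x : ℂ) - (h ξ x : ℂ) * (Complex.ofReal (deriv (h η) x))) := by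
  have hgc : Continuous g := hg.continuous
  have hg'c : Continuous (deriv g) := hg.continuous_deriv le_rfl
  have hgd := tendsto_mul_exp_of_tendsto_mul_h_zero (hdecay 0)
  have hg'd := tendsto_mul_exp_of_tendsto_mul_h_zero (hdecay' 0)
  have hparts := integral_mul_deriv_eq_deriv_mul_of_integrable
    (fun x _ => (hg.differentiable one_ne_zero x).hasDerivAt)
    (fun x _ => (hasDerivAt_wronskian_h ξ η x).ofReal_comp)
    (integrable_mul_of_eq_eval_mul_exp_neg_sq hgc hgd
      (P := C (2 * (η : ℝ) - 2 * ξ) * (hermiteFunctionPoly ξ * hermiteFunctionPoly η))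
      fun t => by rw [h_mul_h_eq, eval_C_mul, mul_assoc])
    (integrable_mul_of_eq_eval_mul_exp_neg_sq hg'c hg'd (wronskian_h_eq ξ η))
    (integrable_mul_of_eq_eval_mul_exp_neg_sq hgc hgd (wronskian_h_eq ξ η))
  have hlhs : ∫ x, g x * (((2 * η - 2 * ξ) * (h ξ x * h η x) : ℝ) : ℂ) =
      (2 * η - 2 * ξ : ℂ) * ∫ x, g x * (h ξ x : ℂ) * (h η x : ℂ) := by
    rw [← integral_const_mul]
    congr 1 with x
    push_cast
    ring
  rw [hlhs] at hparts
  push_cast at hparts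
  linear_combination -hparts
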